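/- arXiv:1908.11180 — 4 statements merged into one kernel-verified Lean document; each statement's English description precedes it below -/
import Mathlib

section
/- Let β, δ > 0 and α ∈ ℝ. If u: [0,L] × [0,∞) → ℂ is a smooth solution of i u_t + i β u_{xxx} + α u_{xx} + i δ u_x = 0 with boundary conditions u(0,t)=0, u_x(L,t)=0, u_{xx}(L,t)=0, then d/dt ‖u(·,t)‖²_{L²(0,L)} = -(β |u_x(0,t)|² + δ |u(L,t)|²) ≤ 0; in particular t ↦ ‖u(·,t)‖_{L²(0,L)} is nonincreasing. -/
open MeasureTheory Set Metric Complex Function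

noncomputable def dxx (w : ℝ → ℝ → ℂ) : ℝ → ℝ → ℂ := fun x s => deriv (fun x' => w x' s) x
noncomputable def dtt (w : ℝ → ℝ → ℂ) : ℝ → ℝ → ℂ := fun x s => deriv (fun τ => w x τ) s

lemma hasDerivAt_slice_fst (w : ℝ → ℝ → ℂ) (hw : ContDiff ℝ (⊤ : ℕ∞) (uncurry w)) (x s : ℝ) :
    HasDerivAt (fun x' => w x' s) (fderiv ℝ (uncurry w) (x, s) (1, 0)) x := by
  have h := (hw.differentiable (by simp) (x, s)).hasFDerivAt
  have hline : HasDerivAt (fun x' : ℝ => ((x' : ℝ), s)) ((1:ℝ), (0:ℝ)) x :=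
    (hasDerivAt_id x).prodMk (hasDerivAt_const x s)
  exact h.comp_hasDerivAt x hline

lemma hasDerivAt_slice_snd (w : ℝ → ℝ → ℂ) (hw : ContDiff ℝ (⊤ : ℕ∞) (uncurry w)) (x s : ℝ) :
    HasDerivAt (fun τ => w x τ) (fderiv ℝ (uncurry w) (x, s) (0, 1)) s := by
  have h := (hw.differentiable (by simp) (x, s)).hasFDerivAt
  have hline : HasDerivAt (fun τ : ℝ => ((x : ℝ), τ)) ((0:ℝ), (1:ℝ)) s :=
    (hasDerivAt_const s x).prodMk (hasDerivAt_id s)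
  exact h.comp_hasDerivAt s hline

lemma contDiff_dxx (w : ℝ → ℝ → ℂ) (hw : ContDiff ℝ (⊤ : ℕ∞) (uncurry w)) :
    ContDiff ℝ (⊤ : ℕ∞) (uncurry (dxx w)) := by
  have : (uncurry (dxx w)) = fun p : ℝ × ℝ => fderiv ℝ (uncurry w) p (1, 0) := by
    ext p
    exact (hasDerivAt_slice_fst w hw p.1 p.2).deriv
  rw [this]
  exact (hw.fderiv_right (m := (⊤ : ℕ∞)) (by simp)).clm_apply contDiff_const

lemma continuous_dtt (w : ℝ → ℝ → ℂ) (hw : ContDiff ℝ (⊤ : ℕ∞) (uncurry w)) :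
    Continuous (uncurry (dtt w)) := by
  have : (uncurry (dtt w)) = fun p : ℝ × ℝ => fderiv ℝ (uncurry w) p (0, 1) := by
    ext p
    exact (hasDerivAt_slice_snd w hw p.1 p.2).deriv
  rw [this]
  exact ((hw.fderiv_right (m := (⊤ : ℕ∞)) (by simp)).clm_apply contDiff_const).continuous

lemma hasDerivAt_re_comp {f : ℝ → ℂ} {f' : ℂ} {x : ℝ} (hf : HasDerivAt f f' x) :
    HasDerivAt (fun y => (f y).re) f'.re x :=
  Complex.reCLM.hasFDerivAt.comp_hasDerivAt x hf

lemma hasDerivAt_im_comp {f : ℝ → ℂ} {f' : ℂ} {x : ℝ} (hf : HasDerivAt f f' x) :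
    HasDerivAt (fun y => (f y).im) f'.im x :=
  Complex.imCLM.hasFDerivAt.comp_hasDerivAt x hf

lemma hasDerivAt_conj_mul {f g : ℝ → ℂ} {f' g' : ℂ} {x : ℝ}
    (hf : HasDerivAt f f' x) (hg : HasDerivAt g g' x) :
    HasDerivAt (fun y => (starRingEnd ℂ) (f y) * g y)
      ((starRingEnd ℂ) f' * g x + (starRingEnd ℂ) (f x) * g') x :=
  hf.star.mul hg

lemma hasDerivAt_normSq_comp {f : ℝ → ℂ} {f' : ℂ} {x : ℝ} (hf : HasDerivAt f f' x) :
    HasDerivAt (fun y => ‖f y‖ ^ 2) (2 * ((starRingEnd ℂ) (f x) * f').re) x := by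
  have h := hasDerivAt_re_comp (hasDerivAt_conj_mul hf hf)
  have heq : (fun y => ‖f y‖ ^ 2) = fun y => ((starRingEnd ℂ) (f y) * f y).re := by
    funext y
    simp [Complex.sq_norm, Complex.normSq_apply, Complex.mul_re,
      Complex.conj_re, Complex.conj_im]
  rw [heq]
  convert h using 1
  simp [Complex.add_re, Complex.mul_re, Complex.conj_re, Complex.conj_im]
  ring

lemma iteratedDeriv_two_eq (w : ℝ → ℝ → ℂ) (t x : ℝ) :
    iteratedDeriv 2 (fun x' => w x' t) x = dxx (dxx w) x t := by
  rw [show (2:ℕ) = 1+1 from rfl, iteratedDeriv_succ, iteratedDeriv_one]; rfl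

lemma iteratedDeriv_three_eq (w : ℝ → ℝ → ℂ) (t x : ℝ) :
    iteratedDeriv 3 (fun x' => w x' t) x = dxx (dxx (dxx w)) x t := by
  rw [show (3:ℕ) = 2+1 from rfl, iteratedDeriv_succ, show (2:ℕ) = 1+1 from rfl,
    iteratedDeriv_succ, iteratedDeriv_one]; rfl

/-- If `β, δ > 0` and `u` is a smooth solution of `i u_t + iβ u_{xxx} + α u_{xx} + iδ u_x = 0`
with `u(0,t) = 0`, `u_x(L,t) = 0`, `u_{xx}(L,t) = 0`, then
`d/dt ‖u(·,t)‖² = -(β|u_x(0,t)|² + δ|u(L,t)|²) ≤ 0`, and the `L²` norm is nonincreasing. -/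
theorem stmt_2 (L β δ α : ℝ) (hL : 0 < L) (hβ : 0 < β) (hδ : 0 < δ)
    (u : ℝ → ℝ → ℂ) (hu : ContDiff ℝ (⊤ : ℕ∞) (Function.uncurry u))
    (hpde : ∀ t : ℝ, 0 ≤ t → ∀ x ∈ Set.Ioo 0 L,
      Complex.I * deriv (fun τ => u x τ) t
        + Complex.I * (β : ℂ) * iteratedDeriv 3 (fun x' => u x' t) x
        + (α : ℂ) * iteratedDeriv 2 (fun x' => u x' t) x
        + Complex.I * (δ : ℂ) * deriv (fun x' => u x' t) x = 0)
    (hbc : ∀ t : ℝ, 0 ≤ t →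
      u 0 t = 0 ∧ deriv (fun x' => u x' t) L = 0
        ∧ iteratedDeriv 2 (fun x' => u x' t) L = 0) :
    (∀ t : ℝ, 0 ≤ t →
      HasDerivAt (fun s => ∫ x in (0:ℝ)..L, ‖u x s‖ ^ 2)
        (-(β * ‖deriv (fun x' => u x' t) 0‖ ^ 2 + δ * ‖u L t‖ ^ 2)) t)
    ∧ (∀ t : ℝ, 0 ≤ t → -(β * ‖deriv (fun x' => u x' t) 0‖ ^ 2 + δ * ‖u L t‖ ^ 2) ≤ 0)
    ∧ AntitoneOn (fun t => Real.sqrt (∫ x in (0:ℝ)..L, ‖u x t‖ ^ 2)) (Set.Ici 0) := by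
  have hu1 : ContDiff ℝ (⊤ : ℕ∞) (uncurry (dxx u)) := contDiff_dxx u hu
  have hu2 : ContDiff ℝ (⊤ : ℕ∞) (uncurry (dxx (dxx u))) := contDiff_dxx _ hu1
  have hu3 : ContDiff ℝ (⊤ : ℕ∞) (uncurry (dxx (dxx (dxx u)))) := contDiff_dxx _ hu2
  have hdx : ∀ (w : ℝ → ℝ → ℂ), ContDiff ℝ (⊤ : ℕ∞) (uncurry w) →
      ∀ x s : ℝ, HasDerivAt (fun x' => w x' s) (dxx w x s) x :=
    fun w hw x s => ((hasDerivAt_slice_fst w hw x s).differentiableAt).hasDerivAt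
  have hdt : ∀ x s : ℝ, HasDerivAt (fun τ => u x τ) (dtt u x s) s :=
    fun x s => ((hasDerivAt_slice_snd u hu x s).differentiableAt).hasDerivAt
  -- the derivative integrand
  set D : ℝ → ℝ → ℝ := fun s x => 2 * ((starRingEnd ℂ) (u x s) * dtt u x s).re with hD
  have hslice_cont : ∀ (w : ℝ → ℝ → ℂ), Continuous (uncurry w) →
      ∀ s : ℝ, Continuous (fun x => w x s) :=
    fun w hw s => hw.comp (continuous_id.prodMk continuous_const)
  have hDcont : Continuous (fun p : ℝ × ℝ => D p.2 p.1) := by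
    apply Continuous.mul continuous_const
    apply Complex.continuous_re.comp
    exact ((Complex.continuous_conj.comp hu.continuous).mul (continuous_dtt u hu))
  -- differentiation under the integral sign
  have key : ∀ t : ℝ, HasDerivAt (fun s => ∫ x in (0:ℝ)..L, ‖u x s‖ ^ 2)
      (∫ x in (0:ℝ)..L, D t x) t := by
    intro t
    obtain ⟨C, hC⟩ := (isCompact_Icc.prod (isCompact_closedBall t 1)).exists_bound_of_continuousOn
      (hDcont.continuousOn (s := Icc (0:ℝ) L ×ˢ closedBall t 1))
    have h := intervalIntegral.hasDerivAt_integral_of_dominated_loc_of_deriv_le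
      (F := fun s x => ‖u x s‖ ^ 2) (F' := D) (a := (0:ℝ)) (b := L) (μ := volume)
      (x₀ := t) (bound := fun _ => C) (s := ball t 1) (ball_mem_nhds t one_pos)
      ?_ ?_ ?_ ?_ ?_ ?_
    · exact h.2
    · exact Filter.Eventually.of_forall fun s =>
        (((hslice_cont u hu.continuous s).norm.pow 2).aestronglyMeasurable)
    · exact ((hslice_cont u hu.continuous t).norm.pow 2).intervalIntegrable 0 L
    · exact (hDcont.comp (continuous_id.prodMk continuous_const)).aestronglyMeasurable
    · refine Filter.Eventually.of_forall fun x hx s hs => ?_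
      have hx' : x ∈ Icc (0:ℝ) L := by
        rw [uIoc_of_le hL.le] at hx; exact ⟨hx.1.le, hx.2⟩
      have := hC (x, s) ⟨hx', ball_subset_closedBall hs⟩
      simpa using this
    · exact intervalIntegrable_const
    · exact Filter.Eventually.of_forall fun x _ s _ => hasDerivAt_normSq_comp (hdt x s)
  -- evaluation of the derivative using the PDE and boundary conditions
  have key2 : ∀ t : ℝ, 0 ≤ t → (∫ x in (0:ℝ)..L, D t x)
      = -(β * ‖dxx u 0 t‖ ^ 2 + δ * ‖u L t‖ ^ 2) := by
    intro t ht
    set φ : ℝ → ℝ := fun x => 2 * ((starRingEnd ℂ) (u x t) *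
      (Complex.I * (α:ℂ) * dxx (dxx u) x t - (β:ℂ) * dxx (dxx (dxx u)) x t
        - (δ:ℂ) * dxx u x t)).re with hφ
    set F : ℝ → ℝ := fun x => β * ‖dxx u x t‖ ^ 2
      - 2 * β * ((starRingEnd ℂ) (u x t) * dxx (dxx u) x t).re
      - 2 * α * ((starRingEnd ℂ) (u x t) * dxx u x t).im
      - δ * ‖u x t‖ ^ 2 with hF
    have hFd : ∀ x : ℝ, HasDerivAt F (φ x) x := by
      intro x
      have hA := (hasDerivAt_normSq_comp (hdx (dxx u) hu1 x t)).const_mul β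
      have hB := (hasDerivAt_re_comp (hasDerivAt_conj_mul (hdx u hu x t)
        (hdx (dxx (dxx u)) hu2 x t))).const_mul (2*β)
      have hCm := (hasDerivAt_im_comp (hasDerivAt_conj_mul (hdx u hu x t)
        (hdx (dxx u) hu1 x t))).const_mul (2*α)
      have hDm := (hasDerivAt_normSq_comp (hdx u hu x t)).const_mul δ
      have h := ((hA.sub hB).sub hCm).sub hDm
      refine h.congr_deriv ?_
      simp only [hφ, Complex.mul_re, Complex.mul_im, Complex.add_re, Complex.add_im,
        Complex.sub_re, Complex.sub_im, Complex.conj_re, Complex.conj_im,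
        Complex.I_re, Complex.I_im, Complex.ofReal_re, Complex.ofReal_im]
      ring
    have c0 := hslice_cont u hu.continuous t
    have c1 := hslice_cont _ hu1.continuous t
    have c2 := hslice_cont _ hu2.continuous t
    have c3 := hslice_cont _ hu3.continuous t
    have hφcont : Continuous φ := by
      apply continuous_const.mul
      exact Complex.continuous_re.comp ((Complex.continuous_conj.comp c0).mul
        (((continuous_const.mul c2).sub (continuous_const.mul c3)).sub
          (continuous_const.mul c1)))
    have hFTC : (∫ x in (0:ℝ)..L, φ x) = F L - F 0 :=
      intervalIntegral.integral_eq_sub_of_hasDerivAt (fun x _ => hFd x)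
        (hφcont.intervalIntegrable 0 L)
    have hcongr : (∫ x in (0:ℝ)..L, D t x) = ∫ x in (0:ℝ)..L, φ x := by
      apply intervalIntegral.integral_congr_ae
      have hne : ∀ᵐ x : ℝ, x ≠ L := compl_mem_ae_iff.mpr (measure_singleton L)
      filter_upwards [hne] with x hxne hxI
      rw [uIoc_of_le hL.le] at hxI
      have hxIoo : x ∈ Ioo (0:ℝ) L := ⟨hxI.1, lt_of_le_of_ne hxI.2 hxne⟩
      have hpd := hpde t ht x hxIoo
      rw [iteratedDeriv_three_eq, iteratedDeriv_two_eq] at hpd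
      have h : Complex.I * dtt u x t + Complex.I * (β:ℂ) * dxx (dxx (dxx u)) x t
          + (α:ℂ) * dxx (dxx u) x t + Complex.I * (δ:ℂ) * dxx u x t = 0 := hpd
      have hut : dtt u x t = Complex.I * (α:ℂ) * dxx (dxx u) x t
          - (β:ℂ) * dxx (dxx (dxx u)) x t - (δ:ℂ) * dxx u x t := by
        have hI : Complex.I * Complex.I = -1 := Complex.I_mul_I
        linear_combination (-Complex.I) * h
          + (dtt u x t + (β:ℂ) * dxx (dxx (dxx u)) x t + (δ:ℂ) * dxx u x t) * hI
      simp only [hD, hφ, hut]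
    obtain ⟨hb0, hb1, hb2⟩ := hbc t ht
    have hb1' : dxx u L t = 0 := hb1
    have hb2' : dxx (dxx u) L t = 0 := by rw [← iteratedDeriv_two_eq]; exact hb2
    rw [hcongr, hFTC, hF]
    simp only [hb0, hb1', hb2']
    simp
    ring
  have part1 : ∀ t : ℝ, 0 ≤ t →
      HasDerivAt (fun s => ∫ x in (0:ℝ)..L, ‖u x s‖ ^ 2)
        (-(β * ‖deriv (fun x' => u x' t) 0‖ ^ 2 + δ * ‖u L t‖ ^ 2)) t := by
    intro t ht
    have := key t
    rw [key2 t ht] at this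
    exact this
  have part2 : ∀ t : ℝ, 0 ≤ t →
      -(β * ‖deriv (fun x' => u x' t) 0‖ ^ 2 + δ * ‖u L t‖ ^ 2) ≤ 0 := by
    intro t ht
    have : (0:ℝ) ≤ β * ‖deriv (fun x' => u x' t) 0‖ ^ 2 + δ * ‖u L t‖ ^ 2 := by positivity
    linarith
  refine ⟨part1, part2, ?_⟩
  have hE : AntitoneOn (fun s => ∫ x in (0:ℝ)..L, ‖u x s‖ ^ 2) (Ici 0) := by
    apply antitoneOn_of_deriv_nonpos (convex_Ici 0)
    · exact Continuous.continuousOn (by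
        exact fun t => (key t).differentiableAt : Differentiable ℝ _).continuous
    · exact fun x _ => ((key x).differentiableAt).differentiableWithinAt
    · intro x hx
      rw [interior_Ici] at hx
      rw [(part1 x hx.le).deriv]
      exact part2 x hx.le
  intro a ha b hb hab
  exact Real.sqrt_le_sqrt (hE ha hb hab)
end

section
/- (Inductive coefficient bound for the kernel series) With the operators P_{i,j} acting on monomials s^m t^k via P_{i,j}(s^m t^k) = c_{i,j} s^{m+i} t^{k+j} (with the coefficients c_{i,j} as specified, vanishing when j + k ≤ 0 or i + m = 1), and M = max{1,|α̃|,|δ̃|,|r̃|}: for every n ≥ 1 and every composition R = P_{i_n,j_n} ⋯ P_{i_1,j_1} with i_q ∈ {1,2}, j_q ∈ {-2,-1,0,1}, applied to the monomial st, if R(st) = C s^β t^{σ+1} with σ = ∑_q j_q > -1, then |C| ≤ M^n / ((n+1)! (σ+1)!). -/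
/-!
Writing `R(st) = C s^β t^κ`, one proves the stronger bound `‖C‖ · β! · κ! ≤ M^n`. It is stable
under each operator: `P_{i,j}` sends `s^m t^k` to `c_{i,j} s^{m+i} t^{k+j}`, and the polynomial
factors of `c_{i,j}` in `m` and `k` (`k (k-1)`, `k`, `1/(k+1)`, `1/(m+1)`, `1/(3 (m+1) (m+2))`)
are cancelled by the ratios `(m+i)!/m!` and `(k+j)!/k!`, leaving a constant of size at most `M`.
The theorem follows since `κ = σ + 1` and every operator raises the `s`-degree, so `β ≥ n + 1`.
-/

/-- The coefficient produced when `P_{i,j}` acts on the monomial `s^m t^k`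
(as `P_{i,j}(s^m t^k) = c_{i,j} s^{m+i} t^{k+j}`), vanishing when `j + k ≤ 0`
or `i + m = 1`. -/
noncomputable def coeffP (α δ r : ℝ) (i : ℕ) (j : ℤ) (m : ℕ) (k : ℤ) : ℂ :=
  if j + k ≤ 0 ∨ i + m = 1 then 0
  else if i = 2 ∧ j = -2 then
    -((k : ℂ) * ((k : ℂ) - 1)) / (3 * ((m : ℂ) + 1) * ((m : ℂ) + 2))
  else if i = 1 ∧ j = -1 then (k : ℂ) / ((m : ℂ) + 1)
  else if i = 2 ∧ j = -1 then
    Complex.I * (α : ℂ) * (k : ℂ) / (3 * ((m : ℂ) + 1) * ((m : ℂ) + 2))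
  else if i = 1 ∧ j = 0 then -2 * Complex.I * (α : ℂ) / (3 * ((m : ℂ) + 1))
  else if i = 2 ∧ j = 0 then -(δ : ℂ) / (3 * ((m : ℂ) + 1) * ((m : ℂ) + 2))
  else if i = 2 ∧ j = 1 then
    (r : ℂ) / (3 * ((m : ℂ) + 1) * ((m : ℂ) + 2) * ((k : ℂ) + 1))
  else 0

/-- Applying a composition of the operators `P_{i,j}` (given as a list of index pairs,
innermost operator last) to the monomial `s t`, keeping track of
(coefficient, s-degree, t-degree). -/
noncomputable def kernelFold (α δ r : ℝ) : List (ℕ × ℤ) → ℂ × ℕ × ℤ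
  | [] => (1, 1, 1)
  | (i, j) :: rest =>
    let s := kernelFold α δ r rest
    (s.1 * coeffP α δ r i j s.2.1 s.2.2, s.2.1 + i, s.2.2 + j)

lemma mul_mul_le_of_le_of_le_one {a ρ M Z : ℝ} (ha : 0 ≤ a) (haM : a ≤ M) (hρ : ρ ≤ 1)
    (hZ : 0 ≤ Z) : ρ * a * Z ≤ M * Z := by
  gcongr
  nlinarith

section
variable {M α δ r : ℝ} (hM : 1 ≤ M) (hα : |α| ≤ M) (hδ : |δ| ≤ M) (hr : |r| ≤ M)
include hM hα hδ hr

lemma norm_coeffP_mul_factorial_le (i : ℕ) (j : ℤ) (m : ℕ) (k : ℤ) :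
    ‖coeffP α δ r i j m k‖ * ((m + i).factorial * (k + j).toNat.factorial) ≤
      M * (m.factorial * k.toNat.factorial) := by
  unfold coeffP
  split_ifs with h0 h22 h11 h21 h10 h20 h21'
  · simp only [norm_zero, zero_mul]; positivity
  · obtain ⟨rfl, rfl⟩ := h22
    obtain ⟨p, rfl⟩ : ∃ p : ℕ, k = p + 3 := ⟨(k - 3).toNat, by omega⟩
    rw [show ((p : ℤ) + 3 + -2).toNat = p + 1 by omega, show ((p : ℤ) + 3).toNat = p + 3 by omega]
    have hc : -(((p + 3 : ℤ) : ℂ) * (((p + 3 : ℤ) : ℂ) - 1)) / (3 * ((m : ℂ) + 1) * ((m : ℂ) + 2))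
        = ((-((p + 3) * (p + 2)) / (3 * (m + 1) * (m + 2)) : ℝ) : ℂ) := by push_cast; ring
    rw [hc, Complex.norm_real, Real.norm_eq_abs, abs_div, abs_neg, abs_of_pos (by positivity),
      abs_of_pos (by positivity)]
    calc _ = 1 / 3 * 1 * (m.factorial * (p + 3).factorial : ℝ) := by
          simp only [Nat.factorial_succ]; push_cast; field_simp; ring
      _ ≤ _ := mul_mul_le_of_le_of_le_one zero_le_one hM (by norm_num) (by positivity)
  · obtain ⟨rfl, rfl⟩ := h11
    obtain ⟨p, rfl⟩ : ∃ p : ℕ, k = p + 2 := ⟨(k - 2).toNat, by omega⟩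
    rw [show ((p : ℤ) + 2 + -1).toNat = p + 1 by omega, show ((p : ℤ) + 2).toNat = p + 2 by omega]
    have hc : ((p + 2 : ℤ) : ℂ) / ((m : ℂ) + 1) = (((p + 2) / (m + 1) : ℝ) : ℂ) := by push_cast; ring
    rw [hc, Complex.norm_real, Real.norm_eq_abs, abs_of_pos (by positivity)]
    calc _ = 1 * 1 * (m.factorial * (p + 2).factorial : ℝ) := by
          simp only [Nat.factorial_succ]; push_cast; field_simp; ring
      _ ≤ _ := mul_mul_le_of_le_of_le_one zero_le_one hM le_rfl (by positivity)
  · obtain ⟨rfl, rfl⟩ := h21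
    obtain ⟨p, rfl⟩ : ∃ p : ℕ, k = p + 2 := ⟨(k - 2).toNat, by omega⟩
    rw [show ((p : ℤ) + 2 + -1).toNat = p + 1 by omega, show ((p : ℤ) + 2).toNat = p + 2 by omega]
    have hc : Complex.I * α * ((p + 2 : ℤ) : ℂ) / (3 * ((m : ℂ) + 1) * ((m : ℂ) + 2))
        = ((α * (p + 2) / (3 * (m + 1) * (m + 2)) : ℝ) : ℂ) * Complex.I := by push_cast; ring
    rw [hc, norm_mul, Complex.norm_I, mul_one, Complex.norm_real, Real.norm_eq_abs, abs_div,
      abs_mul, abs_of_pos (by positivity : (0 : ℝ) < p + 2),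
      abs_of_pos (by positivity : (0 : ℝ) < 3 * (m + 1) * (m + 2))]
    calc _ = 1 / 3 * |α| * (m.factorial * (p + 2).factorial : ℝ) := by
          simp only [Nat.factorial_succ]; push_cast; field_simp; ring
      _ ≤ _ := mul_mul_le_of_le_of_le_one (abs_nonneg α) hα (by norm_num) (by positivity)
  · obtain ⟨rfl, rfl⟩ := h10
    have hc : -2 * Complex.I * α / (3 * ((m : ℂ) + 1))
        = ((-2 * α / (3 * (m + 1)) : ℝ) : ℂ) * Complex.I := by push_cast; ring
    rw [hc, norm_mul, Complex.norm_I, mul_one, Complex.norm_real, Real.norm_eq_abs, abs_div,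
      abs_mul, abs_of_pos (by positivity : (0 : ℝ) < 3 * (m + 1)), add_zero]
    calc _ = 2 / 3 * |α| * (m.factorial * k.toNat.factorial : ℝ) := by
          simp only [Nat.factorial_succ]; push_cast; field_simp; norm_num
      _ ≤ _ := mul_mul_le_of_le_of_le_one (abs_nonneg α) hα (by norm_num) (by positivity)
  · obtain ⟨rfl, rfl⟩ := h20
    have hc : -(δ : ℂ) / (3 * ((m : ℂ) + 1) * ((m : ℂ) + 2))
        = ((-δ / (3 * (m + 1) * (m + 2)) : ℝ) : ℂ) := by push_cast; ring
    rw [hc, Complex.norm_real, Real.norm_eq_abs, abs_div, abs_neg,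
      abs_of_pos (by positivity : (0 : ℝ) < 3 * (m + 1) * (m + 2)), add_zero]
    calc _ = 1 / 3 * |δ| * (m.factorial * k.toNat.factorial : ℝ) := by
          simp only [Nat.factorial_succ]; push_cast; field_simp; ring
      _ ≤ _ := mul_mul_le_of_le_of_le_one (abs_nonneg δ) hδ (by norm_num) (by positivity)
  · obtain ⟨rfl, rfl⟩ := h21'
    obtain ⟨p, rfl⟩ : ∃ p : ℕ, k = p := ⟨k.toNat, by omega⟩
    rw [show ((p : ℤ) + 1).toNat = p + 1 by omega, Int.toNat_natCast]
    have hc : (r : ℂ) / (3 * ((m : ℂ) + 1) * ((m : ℂ) + 2) * (((p : ℤ) : ℂ) + 1))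
        = ((r / (3 * (m + 1) * (m + 2) * (p + 1)) : ℝ) : ℂ) := by push_cast; ring
    rw [hc, Complex.norm_real, Real.norm_eq_abs, abs_div,
      abs_of_pos (by positivity : (0 : ℝ) < 3 * (m + 1) * (m + 2) * (p + 1))]
    calc _ = 1 / 3 * |r| * (m.factorial * p.factorial : ℝ) := by
          simp only [Nat.factorial_succ]; push_cast; field_simp; ring
      _ ≤ _ := mul_mul_le_of_le_of_le_one (abs_nonneg r) hr (by norm_num) (by positivity)
  · simp only [norm_zero, zero_mul]; positivity

lemma norm_kernelFold_mul_factorial_le (ops : List (ℕ × ℤ)) :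
    ‖(kernelFold α δ r ops).1‖ *
        ((kernelFold α δ r ops).2.1.factorial * (kernelFold α δ r ops).2.2.toNat.factorial) ≤
      M ^ ops.length := by
  induction ops with
  | nil => simp [kernelFold]
  | cons op rest ih =>
    obtain ⟨i, j⟩ := op
    simp only [kernelFold, List.length_cons, pow_succ']
    generalize kernelFold α δ r rest = s at ih ⊢
    obtain ⟨C, β, κ⟩ := s
    have hstep := norm_coeffP_mul_factorial_le hM hα hδ hr i j β κ
    calc _ = ‖C‖ * (‖coeffP α δ r i j β κ‖ * ((β + i).factorial * (κ + j).toNat.factorial)) := by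
          rw [norm_mul]; ring
      _ ≤ ‖C‖ * (M * (β.factorial * κ.toNat.factorial)) := by gcongr
      _ = M * (‖C‖ * (β.factorial * κ.toNat.factorial)) := by ring
      _ ≤ M * M ^ rest.length := by gcongr
end

lemma length_add_one_le_kernelFold_snd_fst (α δ r : ℝ) (ops : List (ℕ × ℤ))
    (hi : ∀ q ∈ ops, q.1 = 1 ∨ q.1 = 2) : ops.length + 1 ≤ (kernelFold α δ r ops).2.1 := by
  induction ops with
  | nil => simp [kernelFold]
  | cons op rest ih =>
    have hi_op : 1 ≤ op.1 := by rcases hi op List.mem_cons_self with h | h <;> omega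
    have := ih fun q hq => hi q (List.mem_cons_of_mem _ hq)
    simp only [kernelFold, List.length_cons]
    omega

lemma kernelFold_snd_snd (α δ r : ℝ) (ops : List (ℕ × ℤ)) :
    (kernelFold α δ r ops).2.2 = (ops.map Prod.snd).sum + 1 := by
  induction ops with
  | nil => simp [kernelFold]
  | cons op rest ih => simp only [kernelFold, ih, List.map_cons, List.sum_cons]; ring

theorem stmt_6_general (α δ r : ℝ) (ops : List (ℕ × ℤ))
    (hi : ∀ q ∈ ops, q.1 = 1 ∨ q.1 = 2)
    (σ : ℤ) (hσ : σ = (ops.map Prod.snd).sum) :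
    let M : ℝ := max 1 (max |α| (max |δ| |r|))
    ‖(kernelFold α δ r ops).1‖
      ≤ M ^ ops.length / ((ops.length + 1).factorial * ((σ + 1).toNat).factorial) := by
  intro M
  have hbound := norm_kernelFold_mul_factorial_le (M := M) (α := α) (δ := δ) (r := r)
    (le_max_left _ _) (by simp [M]) (by simp [M]) (by simp [M]) ops
  rw [kernelFold_snd_snd, ← hσ] at hbound
  have hs := Nat.factorial_le (length_add_one_le_kernelFold_snd_fst α δ r ops hi)
  calc _ ≤ M ^ ops.length /
        ((kernelFold α δ r ops).2.1.factorial * ((σ + 1).toNat).factorial) := by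
        rw [le_div_iff₀ (by positivity)]; exact hbound
    _ ≤ _ := by gcongr

/-- Inductive coefficient bound for the kernel series: if
`R(st) = P_{i_n,j_n} ⋯ P_{i_1,j_1}(st) = C s^β t^{σ+1}` with `σ = ∑ j_q > -1`, then
`|C| ≤ M^n / ((n+1)! (σ+1)!)` where `M = max{1,|α̃|,|δ̃|,|r̃|}`. -/
theorem stmt_6 (α δ r : ℝ) (ops : List (ℕ × ℤ)) (hlen : 1 ≤ ops.length)
    (hi : ∀ q ∈ ops, q.1 = 1 ∨ q.1 = 2)
    (hj : ∀ q ∈ ops, q.2 = -2 ∨ q.2 = -1 ∨ q.2 = 0 ∨ q.2 = 1)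
    (σ : ℤ) (hσ : σ = (ops.map Prod.snd).sum) (hσpos : -1 < σ) :
    let M : ℝ := max 1 (max |α| (max |δ| |r|))
    ‖(kernelFold α δ r ops).1‖
      ≤ M ^ ops.length / ((ops.length + 1).factorial * ((σ + 1).toNat).factorial) :=
  stmt_6_general α δ r ops hi σ hσ
end

section
/- (Dissipativity of the third-order operator) Let β > 0, δ ≥ 0, α ∈ ℝ, and define A φ = -β φ''' + iα φ'' - δ φ' on the domain D(A) = {φ ∈ H³(0,L) : φ(0) = φ'(L) = φ''(L) = 0}. Then for every φ ∈ D(A), Re ⟨Aφ, φ⟩_{L²(0,L)} = -δ|φ(L)|²/2 - β|φ'(0)|²/2 ≤ 0; in particular A is dissipative. -/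
/-!
Each term of `Re (Aφ · φ̄)` is an exact derivative: `Re (φ' φ̄) = (|φ|²/2)'`,
`Im (φ'' φ̄) = (Im (φ' φ̄))'` because `φ' φ̄'` is real, and
`Re (φ''' φ̄) = (Re (φ'' φ̄) - |φ'|²/2)'`. Hence `Re ⟨Aφ, φ⟩` is a boundary term, and the
boundary conditions kill everything except `-δ|φ(L)|²/2` at `L` and `β|φ'(0)|²/2` at `0`.
-/

open Set ComplexConjugate

section ExactDerivatives

variable {f f₁ f₂ g : ℝ → ℂ} {F : ℝ → ℂ} {F' f' f₃ g' : ℂ} {x : ℝ}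

theorem HasDerivAt.complex_re (h : HasDerivAt F F' x) : HasDerivAt (fun x => (F x).re) F'.re x :=
  Complex.reCLM.hasFDerivAt.comp_hasDerivAt x h

theorem HasDerivAt.complex_im (h : HasDerivAt F F' x) : HasDerivAt (fun x => (F x).im) F'.im x :=
  Complex.imCLM.hasFDerivAt.comp_hasDerivAt x h

theorem HasDerivAt.mul_conj (hf : HasDerivAt f f' x) (hg : HasDerivAt g g' x) :
    HasDerivAt (fun x => f x * conj (g x)) (f' * conj (g x) + f x * conj g') x :=
  hf.mul hg.star

theorem hasDerivAt_norm_sq_half (hf : HasDerivAt f f' x) :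
    HasDerivAt (fun x => ‖f x‖ ^ 2 / 2) (f' * conj (f x)).re x := by
  have h := (hf.mul_conj hf).complex_re.div_const 2
  simp only [Complex.mul_conj', ← Complex.ofReal_pow, Complex.ofReal_re] at h
  refine h.congr_deriv ?_
  simp only [Complex.add_re, Complex.mul_re, Complex.conj_re, Complex.conj_im]
  ring

theorem hasDerivAt_im_mul_conj (hf : HasDerivAt f (f₁ x) x) (hf₁ : HasDerivAt f₁ (f₂ x) x) :
    HasDerivAt (fun x => (f₁ x * conj (f x)).im) (f₂ x * conj (f x)).im x := by
  refine (hf₁.mul_conj hf).complex_im.congr_deriv ?_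
  simp only [Complex.add_im, Complex.mul_im, Complex.conj_re, Complex.conj_im]
  ring

theorem hasDerivAt_re_mul_conj_sub_norm_sq_half (hf : HasDerivAt f (f₁ x) x)
    (hf₁ : HasDerivAt f₁ (f₂ x) x) (hf₂ : HasDerivAt f₂ f₃ x) :
    HasDerivAt (fun x => (f₂ x * conj (f x)).re - ‖f₁ x‖ ^ 2 / 2) (f₃ * conj (f x)).re x := by
  refine ((hf₂.mul_conj hf).complex_re.sub (hasDerivAt_norm_sq_half hf₁)).congr_deriv ?_
  simp only [Complex.add_re, Complex.mul_re, Complex.conj_re, Complex.conj_im]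
  ring

end ExactDerivatives

section ThirdOrderOperator

variable (β α δ : ℝ) (f f₁ f₂ f₃ : ℝ → ℂ)

noncomputable def thirdOrderBoundaryForm (x : ℝ) : ℝ :=
  -β * ((f₂ x * conj (f x)).re - ‖f₁ x‖ ^ 2 / 2) - α * (f₁ x * conj (f x)).im
    - δ * (‖f x‖ ^ 2 / 2)

variable {β α δ f f₁ f₂ f₃}

theorem hasDerivAt_thirdOrderBoundaryForm {x : ℝ} (hf : HasDerivAt f (f₁ x) x)
    (hf₁ : HasDerivAt f₁ (f₂ x) x) (hf₂ : HasDerivAt f₂ (f₃ x) x) :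
    HasDerivAt (thirdOrderBoundaryForm β α δ f f₁ f₂)
      ((-(β : ℂ) * f₃ x + Complex.I * α * f₂ x - δ * f₁ x) * conj (f x)).re x := by
  refine ((((hasDerivAt_re_mul_conj_sub_norm_sq_half hf hf₁ hf₂).const_mul (-β)).sub
    ((hasDerivAt_im_mul_conj hf hf₁).const_mul α)).sub
    ((hasDerivAt_norm_sq_half hf).const_mul δ)).congr_deriv ?_
  simp only [Complex.sub_re, Complex.add_re, Complex.mul_re, Complex.neg_re, Complex.neg_im,
    Complex.ofReal_re, Complex.ofReal_im, Complex.I_re, Complex.I_im, Complex.mul_im,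
    Complex.sub_im, Complex.add_im]
  ring

theorem re_integral_thirdOrder_mul_conj {a b : ℝ}
    (hf : ∀ x ∈ uIcc a b, HasDerivAt f (f₁ x) x) (hf₁ : ∀ x ∈ uIcc a b, HasDerivAt f₁ (f₂ x) x)
    (hf₂ : ∀ x ∈ uIcc a b, HasDerivAt f₂ (f₃ x) x) (hf₃ : ContinuousOn f₃ (uIcc a b)) :
    (∫ x in a..b, (-(β : ℂ) * f₃ x + Complex.I * α * f₂ x - δ * f₁ x) * conj (f x)).re
      = thirdOrderBoundaryForm β α δ f f₁ f₂ b - thirdOrderBoundaryForm β α δ f f₁ f₂ a := by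
  have hcont {g g' : ℝ → ℂ} (hg : ∀ x ∈ uIcc a b, HasDerivAt g (g' x) x) :
      ContinuousOn g (uIcc a b) :=
    fun x hx => (hg x hx).continuousAt.continuousWithinAt
  have hcont_integrand : ContinuousOn
      (fun x => (-(β : ℂ) * f₃ x + Complex.I * α * f₂ x - δ * f₁ x) * conj (f x)) (uIcc a b) :=
    (((continuousOn_const.mul hf₃).add (continuousOn_const.mul (hcont hf₂))).sub
      (continuousOn_const.mul (hcont hf₁))).mul (hcont hf).star
  rw [← RCLike.re_to_complex,
    ← intervalIntegral.intervalIntegral_re hcont_integrand.intervalIntegrable]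
  exact intervalIntegral.integral_eq_sub_of_hasDerivAt
    (fun x hx => hasDerivAt_thirdOrderBoundaryForm (hf x hx) (hf₁ x hx) (hf₂ x hx))
    (Complex.continuous_re.comp_continuousOn hcont_integrand).intervalIntegrable

end ThirdOrderOperator

theorem ContDiff.hasDerivAt_iteratedDeriv {𝕜 E : Type*} [NontriviallyNormedField 𝕜]
    [NormedAddCommGroup E] [NormedSpace 𝕜 E] {f : 𝕜 → E} {n : WithTop ℕ∞} {k : ℕ}
    (hf : ContDiff 𝕜 n f) (hk : k < n) (x : 𝕜) :
    HasDerivAt (iteratedDeriv k f) (iteratedDeriv (k + 1) f x) x := by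
  rw [iteratedDeriv_succ]
  exact (hf.differentiable_iteratedDeriv k hk x).hasDerivAt

theorem stmt_10_general (L β δ α : ℝ) (hβ : 0 < β) (hδ : 0 ≤ δ)
    (φ : ℝ → ℂ) (hφ : ContDiff ℝ 3 φ)
    (hbc0 : φ 0 = 0) (hbc1 : deriv φ L = 0) (hbc2 : iteratedDeriv 2 φ L = 0) :
    (∫ x in (0:ℝ)..L,
        (-(β : ℂ) * iteratedDeriv 3 φ x + Complex.I * (α : ℂ) * iteratedDeriv 2 φ x
          - (δ : ℂ) * deriv φ x) * (starRingEnd ℂ) (φ x)).re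
      = -δ * ‖φ L‖ ^ 2 / 2 - β * ‖deriv φ 0‖ ^ 2 / 2
    ∧ (∫ x in (0:ℝ)..L,
        (-(β : ℂ) * iteratedDeriv 3 φ x + Complex.I * (α : ℂ) * iteratedDeriv 2 φ x
          - (δ : ℂ) * deriv φ x) * (starRingEnd ℂ) (φ x)).re ≤ 0 := by
  have hφ₀ (x : ℝ) : HasDerivAt φ (deriv φ x) x := (hφ.differentiable (by norm_num) x).hasDerivAt
  have hφ₁ (x : ℝ) : HasDerivAt (deriv φ) (iteratedDeriv 2 φ x) x := by
    simpa using hφ.hasDerivAt_iteratedDeriv (k := 1) (by norm_num) x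
  have hφ₂ (x : ℝ) := hφ.hasDerivAt_iteratedDeriv (k := 2) (by norm_num) x
  have hformula := (re_integral_thirdOrder_mul_conj (β := β) (α := α) (δ := δ) (a := 0) (b := L)
    (fun x _ => hφ₀ x) (fun x _ => hφ₁ x) (fun x _ => hφ₂ x)
    (hφ.continuous_iteratedDeriv 3 le_rfl).continuousOn).trans
    (show _ = -δ * ‖φ L‖ ^ 2 / 2 - β * ‖deriv φ 0‖ ^ 2 / 2 by
      simp only [thirdOrderBoundaryForm, hbc0, hbc1, hbc2, map_zero, mul_zero, zero_mul,
        Complex.zero_re, Complex.zero_im, norm_zero]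
      ring)
  have hnonpos : -δ * ‖φ L‖ ^ 2 / 2 - β * ‖deriv φ 0‖ ^ 2 / 2 ≤ 0 := by
    nlinarith [sq_nonneg ‖φ L‖, sq_nonneg ‖deriv φ 0‖]
  exact ⟨hformula, hformula.trans_le hnonpos⟩

/-- Dissipativity of the third-order operator `Aφ = -βφ''' + iαφ'' - δφ'` with boundary
conditions `φ(0) = φ'(L) = φ''(L) = 0`:
`Re⟨Aφ,φ⟩ = -δ|φ(L)|²/2 - β|φ'(0)|²/2 ≤ 0`. -/
theorem stmt_10 (L β δ α : ℝ) (hL : 0 < L) (hβ : 0 < β) (hδ : 0 ≤ δ)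
    (φ : ℝ → ℂ) (hφ : ContDiff ℝ 3 φ)
    (hbc0 : φ 0 = 0) (hbc1 : deriv φ L = 0) (hbc2 : iteratedDeriv 2 φ L = 0) :
    (∫ x in (0:ℝ)..L,
        (-(β : ℂ) * iteratedDeriv 3 φ x + Complex.I * (α : ℂ) * iteratedDeriv 2 φ x
          - (δ : ℂ) * deriv φ x) * (starRingEnd ℂ) (φ x)).re
      = -δ * ‖φ L‖ ^ 2 / 2 - β * ‖deriv φ 0‖ ^ 2 / 2
    ∧ (∫ x in (0:ℝ)..L,
        (-(β : ℂ) * iteratedDeriv 3 φ x + Complex.I * (α : ℂ) * iteratedDeriv 2 φ x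
          - (δ : ℂ) * deriv φ x) * (starRingEnd ℂ) (φ x)).re ≤ 0 :=
  stmt_10_general L β δ α hβ hδ φ hφ hbc0 hbc1 hbc2
end

section
/- (Equivalence of the kernel boundary value problem and its integral equation) Let G be a C³ function on the closed triangle Δ_{s,t} = {(s,t): s,t ≥ 0, s + t ≤ L} and define DG = (1/3)[3G_{tts} - G_{ttt} - iα̃(2G_{ts} - G_{tt}) - δ̃ G_t + r̃ G]. Then G satisfies the boundary value problem {3G_{sst} - 3G_{tts} + G_{ttt} + iα̃(2G_{ts} - G_{tt}) + δ̃ G_t - r̃ G = 0, G(0,t) = 0, G(s,0) = 0, G_s(0,t) = -r̃ t/3} if and only if G satisfies the integral equation G(s,t) = -(r̃/3) s t + ∫₀^t ∫₀^s ∫₀^ω [DG](ξ,η) dξ dω dη. -/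
/-!
Write `I F (s, t) = ∫₀^t ∫₀^s ∫₀^ω F(ξ, η) dξ dω dη`. Three applications of the fundamental
theorem of calculus (and the symmetry of second derivatives) give, for every `C³` function,
`I (G_{sst}) = G(s,t) - G(s,0) - G(0,t) + G(0,0) - s (G_s(0,t) - G_s(0,0))`. The PDE says exactly
`G_{sst} = DG` on the triangle, so together with the boundary conditions this is the integral
equation. Conversely, the right-hand side `R` of the integral equation vanishes on the axes and
satisfies `R_s(0,t) = -r̃t/3` and `R_{sst} = DG` everywhere; partial derivatives of functions that
agree on the triangle agree on its interior, hence, by continuity, on the closed triangle.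
-/

open intervalIntegral

/-- Partial derivative in the first variable. -/
noncomputable def pdx (f : ℝ → ℝ → ℂ) : ℝ → ℝ → ℂ := fun s t => deriv (fun s' => f s' t) s

/-- Partial derivative in the second variable. -/
noncomputable def pdy (f : ℝ → ℝ → ℂ) : ℝ → ℝ → ℂ := fun s t => deriv (fun t' => f s t') t

open Function Set Filter Topology

noncomputable def primX (F : ℝ → ℝ → ℂ) : ℝ → ℝ → ℂ := fun s t => ∫ ξ in (0:ℝ)..s, F ξ t

noncomputable def primY (F : ℝ → ℝ → ℂ) : ℝ → ℝ → ℂ := fun s t => ∫ η in (0:ℝ)..t, F s η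

def triangle (L : ℝ) : Set (ℝ × ℝ) := {p | 0 ≤ p.1 ∧ 0 ≤ p.2 ∧ p.1 + p.2 ≤ L}

section PartialDerivatives

variable {H : ℝ → ℝ → ℂ}

lemma hasDerivAt_prodMk_const (s t : ℝ) :
    HasDerivAt (fun s' : ℝ => (s', t)) ((1 : ℝ), (0 : ℝ)) s :=
  (hasDerivAt_id s).prodMk (hasDerivAt_const s t)

lemma hasDerivAt_const_prodMk (s t : ℝ) :
    HasDerivAt (fun t' : ℝ => (s, t')) ((0 : ℝ), (1 : ℝ)) t :=
  (hasDerivAt_const t s).prodMk (hasDerivAt_id t)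

lemma hasDerivAt_pdx (hH : Differentiable ℝ (uncurry H)) (s t : ℝ) :
    HasDerivAt (fun s' => H s' t) (pdx H s t) s :=
  (hH.comp (differentiable_id.prodMk (differentiable_const t)) s).hasDerivAt

lemma hasDerivAt_pdy (hH : Differentiable ℝ (uncurry H)) (s t : ℝ) :
    HasDerivAt (fun t' => H s t') (pdy H s t) t :=
  (hH.comp ((differentiable_const s).prodMk differentiable_id) t).hasDerivAt

lemma pdx_eq_fderiv (hH : Differentiable ℝ (uncurry H)) (s t : ℝ) :
    pdx H s t = fderiv ℝ (uncurry H) (s, t) (1, 0) := by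
  have := (hH (s, t)).hasFDerivAt.comp_hasDerivAt s (hasDerivAt_prodMk_const s t)
  exact this.deriv

lemma pdy_eq_fderiv (hH : Differentiable ℝ (uncurry H)) (s t : ℝ) :
    pdy H s t = fderiv ℝ (uncurry H) (s, t) (0, 1) := by
  have := (hH (s, t)).hasFDerivAt.comp_hasDerivAt t (hasDerivAt_const_prodMk s t)
  exact this.deriv

lemma contDiff_pdx {n : WithTop ℕ∞} (hH : ContDiff ℝ (n + 1) (uncurry H)) :
    ContDiff ℝ n (uncurry (pdx H)) := by
  have : uncurry (pdx H) = fun p => fderiv ℝ (uncurry H) p (1, 0) :=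
    funext fun p => pdx_eq_fderiv (hH.differentiable (by simp)) p.1 p.2
  exact this ▸ (hH.fderiv_right le_rfl).clm_apply contDiff_const

lemma contDiff_pdy {n : WithTop ℕ∞} (hH : ContDiff ℝ (n + 1) (uncurry H)) :
    ContDiff ℝ n (uncurry (pdy H)) := by
  have : uncurry (pdy H) = fun p => fderiv ℝ (uncurry H) p (0, 1) :=
    funext fun p => pdy_eq_fderiv (hH.differentiable (by simp)) p.1 p.2
  exact this ▸ (hH.fderiv_right le_rfl).clm_apply contDiff_const

lemma pdx_pdy_comm (hH : ContDiff ℝ 2 (uncurry H)) : pdx (pdy H) = pdy (pdx H) := by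
  funext s t
  have hd : Differentiable ℝ (uncurry H) := hH.differentiable two_ne_zero
  have hfd : ContDiff ℝ 1 (fderiv ℝ (uncurry H)) := hH.fderiv_right (by norm_num)
  have hdd : HasFDerivAt (fderiv ℝ (uncurry H))
      (fderiv ℝ (fderiv ℝ (uncurry H)) (s, t)) (s, t) :=
    (hfd.differentiable one_ne_zero (s, t)).hasFDerivAt
  have hx : HasDerivAt (fun s' => pdy H s' t)
      (fderiv ℝ (fderiv ℝ (uncurry H)) (s, t) (1, 0) (0, 1)) s := by
    have hc : HasDerivAt (fun s' : ℝ => fderiv ℝ (uncurry H) (s', t))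
        (fderiv ℝ (fderiv ℝ (uncurry H)) (s, t) (1, 0)) s :=
      hdd.comp_hasDerivAt s (hasDerivAt_prodMk_const s t)
    have := hc.clm_apply (hasDerivAt_const s ((0 : ℝ), (1 : ℝ)))
    simp only [map_zero, add_zero] at this
    exact this.congr_of_eventuallyEq (.of_forall fun s' => pdy_eq_fderiv hd s' t)
  have hy : HasDerivAt (fun t' => pdx H s t')
      (fderiv ℝ (fderiv ℝ (uncurry H)) (s, t) (0, 1) (1, 0)) t := by
    have hc : HasDerivAt (fun t' : ℝ => fderiv ℝ (uncurry H) (s, t'))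
        (fderiv ℝ (fderiv ℝ (uncurry H)) (s, t) (0, 1)) t :=
      hdd.comp_hasDerivAt t (hasDerivAt_const_prodMk s t)
    have := hc.clm_apply (hasDerivAt_const t ((1 : ℝ), (0 : ℝ)))
    simp only [map_zero, add_zero] at this
    exact this.congr_of_eventuallyEq (.of_forall fun t' => pdx_eq_fderiv hd s t')
  rw [pdx, hx.deriv, pdy, hy.deriv,
    second_derivative_symmetric (fun y => (hd y).hasFDerivAt) hdd]

lemma primX_pdx (hH : ContDiff ℝ 1 (uncurry H)) (s t : ℝ) :
    primX (pdx H) s t = H s t - H 0 t :=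
  integral_eq_sub_of_hasDerivAt (fun x _ => hasDerivAt_pdx (hH.differentiable one_ne_zero) x t)
    (((contDiff_pdx (n := 0) hH).continuous.uncurry_right t).intervalIntegrable 0 s)

lemma primY_pdy (hH : ContDiff ℝ 1 (uncurry H)) (s t : ℝ) :
    primY (pdy H) s t = H s t - H s 0 :=
  integral_eq_sub_of_hasDerivAt (fun y _ => hasDerivAt_pdy (hH.differentiable one_ne_zero) s y)
    (((contDiff_pdy (n := 0) hH).continuous.uncurry_left s).intervalIntegrable 0 t)

end PartialDerivatives

section Primitives

variable {F : ℝ → ℝ → ℂ}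

lemma continuous_primY (hF : Continuous (uncurry F)) : Continuous (uncurry (primY F)) :=
  continuous_parametric_primitive_of_continuous hF

lemma continuous_primX (hF : Continuous (uncurry F)) : Continuous (uncurry (primX F)) :=
  (continuous_primY (F := fun t s => F s t) (hF.comp continuous_swap)).comp continuous_swap

lemma hasDerivAt_primX (hF : Continuous (uncurry F)) (s t : ℝ) :
    HasDerivAt (fun s' => primX F s' t) (F s t) s :=
  integral_hasDerivAt_right ((hF.uncurry_right t).intervalIntegrable 0 s)
    (hF.uncurry_right t).stronglyMeasurable.stronglyMeasurableAtFilter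
    (hF.uncurry_right t).continuousAt

lemma hasDerivAt_primY (hF : Continuous (uncurry F)) (s t : ℝ) :
    HasDerivAt (fun t' => primY F s t') (F s t) t :=
  integral_hasDerivAt_right ((hF.uncurry_left s).intervalIntegrable 0 t)
    (hF.uncurry_left s).stronglyMeasurable.stronglyMeasurableAtFilter
    (hF.uncurry_left s).continuousAt

lemma hasDerivAt_primY_primX (hF : Continuous (uncurry F)) (s t : ℝ) :
    HasDerivAt (fun s' => primY (primX F) s' t) (primY F s t) s := by
  obtain ⟨M, hM⟩ := (isCompact_Icc.prod isCompact_uIcc :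
      IsCompact (Icc (s - 1) (s + 1) ×ˢ uIcc 0 t)).exists_bound_of_continuousOn hF.continuousOn
  refine (hasDerivAt_integral_of_dominated_loc_of_deriv_le (F := fun x η => primX F x η)
    (bound := fun _ => M) (Metric.ball_mem_nhds s one_pos)
    (.of_forall fun x => ((continuous_primX hF).uncurry_left x).aestronglyMeasurable)
    (((continuous_primX hF).uncurry_left s).intervalIntegrable 0 t)
    (hF.uncurry_left s).aestronglyMeasurable ?_ intervalIntegrable_const
    (.of_forall fun η _ x _ => hasDerivAt_primX hF x η)).2
  refine .of_forall fun η hη x hx => hM (x, η) ⟨?_, uIoc_subset_uIcc hη⟩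
  have := abs_le.mp (Real.dist_eq x s ▸ (Metric.mem_ball.mp hx)).le
  constructor <;> linarith [this.1, this.2]

lemma primY_primX_const_add (hF : Continuous (uncurry F)) (c : ℂ) (s t : ℝ) :
    primY (primX fun ω η => c + F ω η) s t = c * s * t + primY (primX F) s t := by
  have hinner : ∀ η, primX (fun ω η => c + F ω η) s η = s * c + primX F s η := fun η => by
    simp only [primX, integral_add intervalIntegrable_const
      ((hF.uncurry_right η).intervalIntegrable 0 s), integral_const, sub_zero, Complex.real_smul]
  simp only [primY, hinner]
  rw [integral_add intervalIntegrable_const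
    (((continuous_primX hF).uncurry_left s).intervalIntegrable 0 t), integral_const]
  simp only [sub_zero, Complex.real_smul]
  ring

end Primitives

lemma primY_primX_primX_congr {F F' : ℝ → ℝ → ℂ} {s t : ℝ} (hs : 0 ≤ s) (ht : 0 ≤ t)
    (h : ∀ ξ ∈ Icc 0 s, ∀ η ∈ Icc 0 t, F ξ η = F' ξ η) :
    primY (primX (primX F)) s t = primY (primX (primX F')) s t := by
  refine integral_congr fun η hη => integral_congr fun ω hω => integral_congr fun ξ hξ => ?_
  rw [uIcc_of_le ht] at hη
  rw [uIcc_of_le hs] at hω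
  rw [uIcc_of_le hω.1] at hξ
  exact h ξ ⟨hξ.1, hξ.2.trans hω.2⟩ η hη

lemma primY_primX_primX_pdx_pdx_pdy {G : ℝ → ℝ → ℂ} (hG : ContDiff ℝ 3 (uncurry G))
    (s t : ℝ) :
    primY (primX (primX (pdx (pdx (pdy G))))) s t
      = G s t - G s 0 - G 0 t + G 0 0 - s * (pdx G 0 t - pdx G 0 0) := by
  have hG3 : ContDiff ℝ (1 + 1 + 1) (uncurry G) := by norm_num; exact hG
  have hGy : ContDiff ℝ (1 + 1) (uncurry (pdy G)) := contDiff_pdy hG3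
  have hGx : ContDiff ℝ (1 + 1) (uncurry (pdx G)) := contDiff_pdx hG3
  have hGxy : ContDiff ℝ 1 (uncurry (pdx (pdy G))) := contDiff_pdx hGy
  have inner_integral (η : ℝ) : primX (primX (pdx (pdx (pdy G)))) s η
      = pdy G s η - pdy G 0 η - s * pdx (pdy G) 0 η := by
    change ∫ ω in (0:ℝ)..s, primX (pdx (pdx (pdy G))) ω η = _
    simp_rw [primX_pdx hGxy]
    rw [integral_sub ((hGxy.continuous.uncurry_right η).intervalIntegrable 0 s)
      intervalIntegrable_const, integral_const, Complex.real_smul, sub_zero]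
    rw [show ∫ ω in (0:ℝ)..s, pdx (pdy G) ω η = pdy G s η - pdy G 0 η from
      primX_pdx (hGy.of_le (by norm_num)) s η]
  change ∫ η in (0:ℝ)..t, primX (primX (pdx (pdx (pdy G)))) s η = _
  simp_rw [inner_integral, pdx_pdy_comm (hG3.of_le (by norm_num))]
  have hi (a : ℝ) : IntervalIntegrable (fun η => pdy G a η) MeasureTheory.volume 0 t :=
    (hGy.continuous.uncurry_left a).intervalIntegrable 0 t
  have hi' : IntervalIntegrable (fun η => s * pdy (pdx G) 0 η) MeasureTheory.volume 0 t :=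
    (((contDiff_pdy hGx).continuous.uncurry_left 0).const_mul _).intervalIntegrable 0 t
  rw [integral_sub ((hi s).sub (hi 0)) hi', integral_sub (hi s) (hi 0), integral_const_mul]
  rw [show ∫ η in (0:ℝ)..t, pdy G s η = G s t - G s 0 from primY_pdy (hG3.of_le (by norm_num)) s t,
    show ∫ η in (0:ℝ)..t, pdy G 0 η = G 0 t - G 0 0 from primY_pdy (hG3.of_le (by norm_num)) 0 t,
    show ∫ η in (0:ℝ)..t, pdy (pdx G) 0 η = pdx G 0 t - pdx G 0 0 from
      primY_pdy (hGx.of_le (by norm_num)) 0 t]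
  ring

section EqOn

variable {T : Set (ℝ × ℝ)} {f g g' : ℝ → ℝ → ℂ}

lemma Convex.eqOn_of_eqOn_interior (hT : Convex ℝ T) (hT' : (interior T).Nonempty)
    {u v : ℝ × ℝ → ℂ} (hu : Continuous u) (hv : Continuous v) (h : EqOn u v (interior T)) :
    EqOn u v T :=
  h.of_subset_closure hu.continuousOn hv.continuousOn interior_subset
    (hT.closure_interior_eq_closure_of_nonempty_interior hT' ▸ subset_closure)

lemma Convex.eqOn_pdx_of_hasDerivAt (hT : Convex ℝ T) (hT' : (interior T).Nonempty)
    (hf : Continuous (uncurry (pdx f))) (hg' : Continuous (uncurry g'))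
    (hg : ∀ s t, HasDerivAt (fun s' => g s' t) (g' s t) s)
    (h : EqOn (uncurry f) (uncurry g) T) : EqOn (uncurry (pdx f)) (uncurry g') T := by
  refine hT.eqOn_of_eqOn_interior hT' hf hg' fun p hp => ?_
  have hc : ContinuousAt (fun s : ℝ => (s, p.2)) p.1 := by fun_prop
  have hfg : (fun s => f s p.2) =ᶠ[𝓝 p.1] fun s => g s p.2 :=
    eventually_of_mem (hc.preimage_mem_nhds (isOpen_interior.mem_nhds hp))
      fun s hs => h (interior_subset hs)
  exact hfg.deriv_eq.trans (hg p.1 p.2).deriv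

lemma Convex.eqOn_pdy_of_hasDerivAt (hT : Convex ℝ T) (hT' : (interior T).Nonempty)
    (hf : Continuous (uncurry (pdy f))) (hg' : Continuous (uncurry g'))
    (hg : ∀ s t, HasDerivAt (fun t' => g s t') (g' s t) t)
    (h : EqOn (uncurry f) (uncurry g) T) : EqOn (uncurry (pdy f)) (uncurry g') T := by
  refine hT.eqOn_of_eqOn_interior hT' hf hg' fun p hp => ?_
  have hc : ContinuousAt (fun t : ℝ => (p.1, t)) p.2 := by fun_prop
  have hfg : (fun t => f p.1 t) =ᶠ[𝓝 p.2] fun t => g p.1 t :=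
    eventually_of_mem (hc.preimage_mem_nhds (isOpen_interior.mem_nhds hp))
      fun t ht => h (interior_subset ht)
  exact hfg.deriv_eq.trans (hg p.1 p.2).deriv

end EqOn

lemma convex_triangle (L : ℝ) : Convex ℝ (triangle L) := by
  rintro ⟨s, t⟩ ⟨hs, ht, hst⟩ ⟨s', t'⟩ ⟨hs', ht', hst'⟩ a b ha hb hab
  refine ⟨?_, ?_, ?_⟩ <;> simp only [Prod.smul_mk, Prod.mk_add_mk, smul_eq_mul] <;> nlinarith

lemma interior_triangle_nonempty {L : ℝ} (hL : 0 < L) : (interior (triangle L)).Nonempty := by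
  have hU : IsOpen {p : ℝ × ℝ | 0 < p.1 ∧ 0 < p.2 ∧ p.1 + p.2 < L} :=
    (isOpen_lt continuous_const continuous_fst).inter
      ((isOpen_lt continuous_const continuous_snd).inter
        (isOpen_lt (continuous_fst.add continuous_snd) continuous_const))
  refine ⟨(L / 4, L / 4), interior_maximal (fun p hp => ?_) hU ?_⟩
  · exact ⟨hp.1.le, hp.2.1.le, hp.2.2.le⟩
  · exact ⟨by positivity, by positivity, by linarith⟩

lemma eq_mul_add_primY_primX_primX_of_pdx_pdx_pdy_eqOn {G D : ℝ → ℝ → ℂ} {L : ℝ} {c : ℂ}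
    (hG : ContDiff ℝ 3 (uncurry G))
    (hD : EqOn (uncurry (pdx (pdx (pdy G)))) (uncurry D) (triangle L))
    (h0t : ∀ t ∈ Icc 0 L, G 0 t = 0) (hs0 : ∀ s ∈ Icc 0 L, G s 0 = 0)
    (hx : ∀ t ∈ Icc 0 L, pdx G 0 t = c * t) (s t : ℝ) (hs : 0 ≤ s) (ht : 0 ≤ t)
    (hst : s + t ≤ L) :
    G s t = c * s * t + primY (primX (primX D)) s t := by
  have hK : ∀ ξ ∈ Icc 0 s, ∀ η ∈ Icc 0 t, pdx (pdx (pdy G)) ξ η = D ξ η :=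
    fun ξ hξ η hη => hD (show (ξ, η) ∈ triangle L from ⟨hξ.1, hη.1, by linarith [hξ.2, hη.2]⟩)
  rw [← primY_primX_primX_congr hs ht hK, primY_primX_primX_pdx_pdx_pdy hG,
    hs0 s ⟨hs, by linarith⟩, h0t t ⟨ht, by linarith⟩, h0t 0 ⟨le_rfl, by linarith⟩,
    hx t ⟨ht, by linarith⟩, hx 0 ⟨le_rfl, by linarith⟩]
  push_cast
  ring

lemma pdx_pdx_pdy_eqOn_of_eq_mul_add_primY_primX_primX {G D : ℝ → ℝ → ℂ} {L : ℝ} {c : ℂ}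
    (hL : 0 < L) (hG : ContDiff ℝ 3 (uncurry G)) (hD : Continuous (uncurry D))
    (h : ∀ s t, 0 ≤ s → 0 ≤ t → s + t ≤ L → G s t = c * s * t + primY (primX (primX D)) s t) :
    EqOn (uncurry (pdx (pdx (pdy G)))) (uncurry D) (triangle L)
      ∧ (∀ t ∈ Icc 0 L, G 0 t = 0) ∧ (∀ s ∈ Icc 0 L, G s 0 = 0)
      ∧ ∀ t ∈ Icc 0 L, pdx G 0 t = c * t := by
  have hG3 : ContDiff ℝ (0 + 1 + 1 + 1) (uncurry G) := by norm_num; exact hG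
  set F : ℝ → ℝ → ℂ := fun ω η => c + primX D ω η with hFdef
  have hF : Continuous (uncurry F) := continuous_const.add (continuous_primX hD)
  have hT := convex_triangle L
  have hT' := interior_triangle_nonempty hL
  have hEq : EqOn (uncurry G) (uncurry (primY (primX F))) (triangle L) :=
    fun ⟨s, t⟩ ⟨hs, ht, hst⟩ => by
      simp only [uncurry_apply_pair, hFdef, primY_primX_const_add (continuous_primX hD)]
      exact h s t hs ht hst
  have hy : EqOn (uncurry (pdy G)) (uncurry (primX F)) (triangle L) :=
    hT.eqOn_pdy_of_hasDerivAt hT' (contDiff_pdy hG3).continuous (continuous_primX hF)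
      (hasDerivAt_primY (continuous_primX hF)) hEq
  have hxy : EqOn (uncurry (pdx (pdy G))) (uncurry F) (triangle L) :=
    hT.eqOn_pdx_of_hasDerivAt hT' (contDiff_pdx (contDiff_pdy hG3)).continuous hF
      (hasDerivAt_primX hF) hy
  have hx : EqOn (uncurry (pdx G)) (uncurry (primY F)) (triangle L) :=
    hT.eqOn_pdx_of_hasDerivAt hT' (contDiff_pdx hG3).continuous (continuous_primY hF)
      (hasDerivAt_primY_primX hF) hEq
  have hxxy : EqOn (uncurry (pdx (pdx (pdy G)))) (uncurry D) (triangle L) :=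
    hT.eqOn_pdx_of_hasDerivAt hT' (contDiff_pdx (contDiff_pdx (contDiff_pdy hG3))).continuous hD
      (fun s t => (hasDerivAt_primX hD s t).const_add c) hxy
  refine ⟨hxxy, fun t ht => ?_, fun s hs => ?_, fun t ht => ?_⟩
  · simpa [primY, primX] using h 0 t le_rfl ht.1 (by linarith [ht.2])
  · simpa [primY] using h s 0 hs.1 le_rfl (by linarith [hs.2])
  · have h0t : (0, t) ∈ triangle L := ⟨le_rfl, ht.1, by linarith [ht.2]⟩
    rw [show pdx G 0 t = primY F 0 t from hx h0t]
    simp only [primY, hFdef, primX, integral_same, add_zero, integral_const, sub_zero,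
      Complex.real_smul]
    ring

/-- Equivalence of the kernel boundary value problem and its integral equation:
with `DG = (1/3)[3G_{tts} - G_{ttt} - iα̃(2G_{ts} - G_{tt}) - δ̃G_t + r̃G]`, the function `G`
solves the BVP on the closed triangle iff it solves
`G(s,t) = -(r̃/3)st + ∫₀^t∫₀^s∫₀^ω DG(ξ,η) dξ dω dη`. -/
theorem stmt_17 (L α δ r : ℝ) (hL : 0 < L) (G : ℝ → ℝ → ℂ)
    (hG : ContDiff ℝ 3 (Function.uncurry G)) :
    let DG : ℝ → ℝ → ℂ := fun s t =>
      (1 / 3 : ℂ) * (3 * pdx (pdy (pdy G)) s t - pdy (pdy (pdy G)) s t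
        - Complex.I * (α : ℂ) * (2 * pdy (pdx G) s t - pdy (pdy G) s t)
        - (δ : ℂ) * pdy G s t + (r : ℂ) * G s t)
    ((∀ s t : ℝ, 0 ≤ s → 0 ≤ t → s + t ≤ L →
        3 * pdy (pdx (pdx G)) s t - 3 * pdx (pdy (pdy G)) s t + pdy (pdy (pdy G)) s t
          + Complex.I * (α : ℂ) * (2 * pdy (pdx G) s t - pdy (pdy G) s t)
          + (δ : ℂ) * pdy G s t - (r : ℂ) * G s t = 0)
      ∧ (∀ t ∈ Set.Icc (0:ℝ) L, G 0 t = 0)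
      ∧ (∀ s ∈ Set.Icc (0:ℝ) L, G s 0 = 0)
      ∧ (∀ t ∈ Set.Icc (0:ℝ) L, pdx G 0 t = -(r : ℂ) * (t : ℂ) / 3))
    ↔ (∀ s t : ℝ, 0 ≤ s → 0 ≤ t → s + t ≤ L →
        G s t = -((r : ℂ) / 3) * (s : ℂ) * (t : ℂ)
          + ∫ η in (0:ℝ)..t, ∫ ω in (0:ℝ)..s, ∫ ξ in (0:ℝ)..ω, DG ξ η) := by
  intro DG
  have hG3 : ContDiff ℝ (0 + 1 + 1 + 1) (uncurry G) := by norm_num; exact hG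
  have hsymm : pdy (pdx (pdx G)) = pdx (pdx (pdy G)) := by
    rw [pdx_pdy_comm (hG3.of_le (by norm_num)),
      pdx_pdy_comm ((contDiff_pdx hG3).of_le (by norm_num))]
  have hDG : Continuous (uncurry DG) := by
    have hGyy : ContDiff ℝ (0 + 1) (uncurry (pdy (pdy G))) := contDiff_pdy (contDiff_pdy hG3)
    have h₁ : Continuous fun p : ℝ × ℝ => pdx (pdy (pdy G)) p.1 p.2 :=
      (contDiff_pdx hGyy).continuous
    have h₂ : Continuous fun p : ℝ × ℝ => pdy (pdy (pdy G)) p.1 p.2 :=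
      (contDiff_pdy hGyy).continuous
    have h₃ : Continuous fun p : ℝ × ℝ => pdy (pdx G) p.1 p.2 :=
      (contDiff_pdy (contDiff_pdx hG3)).continuous
    have h₄ : Continuous fun p : ℝ × ℝ => pdy (pdy G) p.1 p.2 := hGyy.continuous
    have h₅ : Continuous fun p : ℝ × ℝ => pdy G p.1 p.2 := (contDiff_pdy hG3).continuous
    have h₆ : Continuous fun p : ℝ × ℝ => G p.1 p.2 := hG3.continuous
    simp only [uncurry_def, DG]
    fun_prop
  constructor
  · rintro ⟨hPDE, h0t, hs0, hx⟩
    refine eq_mul_add_primY_primX_primX_of_pdx_pdx_pdy_eqOn hG (fun ⟨s, t⟩ ⟨hs, ht, hst⟩ => ?_)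
      h0t hs0 fun t ht => (hx t ht).trans (by ring)
    simp only [uncurry_apply_pair, ← hsymm]
    linear_combination hPDE s t hs ht hst / 3
  · intro h
    obtain ⟨hK, h0t, hs0, hx⟩ :=
      pdx_pdx_pdy_eqOn_of_eq_mul_add_primY_primX_primX hL hG hDG h
    refine ⟨fun s t hs ht hst => ?_, h0t, hs0, fun t ht => (hx t ht).trans (by ring)⟩
    have hst' := hK (show (s, t) ∈ triangle L from ⟨hs, ht, hst⟩)
    simp only [uncurry_apply_pair, ← hsymm] at hst'
    linear_combination 3 * hst'
end
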